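/- arXiv:1610.07351 — 4 statements merged into one kernel-verified Lean document; each statement's English description precedes it below -/
import Mathlib

section
/- Let 1 < p < ∞ and let (B_i)_{i∈ℕ} be a sequence of Banach spaces. If the ℓ^p-direct sum ⊕_p B_i := { b = (b_i) : b_i ∈ B_i, (∑ ‖b_i‖^p)^{1/p} < ∞ } is uniformly convex, then the family (B_i) has a common modulus of convexity, i.e., inf_i δ_{B_i}(t) > 0 for every t > 0. -/
open ENNReal

/- Each `B i` sits isometrically in `ℓ^p(B)` via `lp.single p i`, so the single constant that
uniform convexity of `ℓ^p(B)` provides for a separation `t` bounds every `δ_{B i}(t)` from below. -/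

-- `sInf ∅ = 0`: this is `0` when `E` has no unit vectors at distance `≥ t` (e.g. `t > 2`).
noncomputable def modulusOfConvexity (E : Type*) [SeminormedAddCommGroup E] (t : ℝ) : ℝ :=
  sInf {s : ℝ | ∃ ξ ξ' : E, ‖ξ‖ = 1 ∧ ‖ξ'‖ = 1 ∧ t ≤ ‖ξ - ξ'‖ ∧ s = 1 - ‖ξ + ξ'‖ / 2}

theorem le_modulusOfConvexity {E : Type*} [NormedAddCommGroup E] [NormedSpace ℝ E] [Nontrivial E]
    {t ε : ℝ} (ht : t ≤ 2)
    (h : ∀ x y : E, ‖x‖ = 1 → ‖y‖ = 1 → t ≤ ‖x - y‖ → ‖x + y‖ ≤ 2 - ε) :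
    ε / 2 ≤ modulusOfConvexity E t := by
  obtain ⟨x, hx⟩ := exists_norm_eq E zero_le_one
  have hx_antipodal : t ≤ ‖x - -x‖ := by
    rw [sub_neg_eq_add, ← two_smul ℝ x, norm_smul, hx]
    simpa using ht
  refine le_csInf ⟨_, x, -x, hx, by rwa [norm_neg], hx_antipodal, rfl⟩ ?_
  rintro s ⟨ξ, ξ', hξ, hξ', hsep, rfl⟩
  linarith [h ξ ξ' hξ hξ' hsep]

theorem exists_forall_norm_add_le_two_sub_of_uniformConvexSpace_lp {α : Type*} [DecidableEq α]
    {E : α → Type*} [∀ i, NormedAddCommGroup (E i)] {p : ℝ≥0∞} [Fact (1 ≤ p)]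
    [UniformConvexSpace (lp E p)] {t : ℝ} (ht : 0 < t) :
    ∃ ε, 0 < ε ∧ ∀ i (x y : E i), ‖x‖ = 1 → ‖y‖ = 1 → t ≤ ‖x - y‖ → ‖x + y‖ ≤ 2 - ε := by
  obtain ⟨ε, hε, hconv⟩ := exists_forall_sphere_dist_add_le_two_sub (lp E p) ht
  refine ⟨ε, hε, fun i x y hx hy hxy => ?_⟩
  have norm_single := lp.norm_single (E := E) (zero_lt_one.trans_le (Fact.out : 1 ≤ p)) i
  have := @hconv (lp.single p i x) (by rwa [norm_single]) (lp.single p i y)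
    (by rwa [norm_single]) (by rwa [← lp.single_sub, norm_single])
  rwa [← lp.single_add, norm_single] at this

theorem stmt_9_general (p : ℝ≥0∞) [Fact (1 ≤ p)]
    (B : ℕ → Type*) [∀ i, NormedAddCommGroup (B i)] [∀ i, NormedSpace ℝ (B i)]
    [∀ i, Nontrivial (B i)]
    (δ : ℕ → ℝ → ℝ)
    (hδ : ∀ i (t : ℝ), δ i t = sInf {s : ℝ | ∃ ξ ξ' : B i,
      ‖ξ‖ = 1 ∧ ‖ξ'‖ = 1 ∧ t ≤ ‖ξ - ξ'‖ ∧ s = 1 - ‖ξ + ξ'‖ / 2})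
    (huc : UniformConvexSpace (lp B p)) :
    ∀ t : ℝ, 0 < t → t ≤ 2 → 0 < ⨅ i, δ i t := by
  intro t ht ht2
  obtain ⟨ε, hε, hB⟩ := exists_forall_norm_add_le_two_sub_of_uniformConvexSpace_lp
    (E := B) (p := p) ht
  calc 0 < ε / 2 := half_pos hε
    _ ≤ ⨅ i, δ i t := le_ciInf fun i => (hδ i t).trans_ge (le_modulusOfConvexity ht2 (hB i))

/-- If the `ℓ^p` direct sum of Banach spaces is uniformly convex, the family has a
common modulus of convexity. -/
theorem stmt_9 (p : ℝ≥0∞) [Fact (1 ≤ p)] (hp : 1 < p) (hp' : p ≠ ⊤)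
    (B : ℕ → Type*) [∀ i, NormedAddCommGroup (B i)] [∀ i, NormedSpace ℝ (B i)]
    [∀ i, CompleteSpace (B i)] [∀ i, Nontrivial (B i)]
    (δ : ℕ → ℝ → ℝ)
    (hδ : ∀ i (t : ℝ), δ i t = sInf {s : ℝ | ∃ ξ ξ' : B i,
      ‖ξ‖ = 1 ∧ ‖ξ'‖ = 1 ∧ t ≤ ‖ξ - ξ'‖ ∧ s = 1 - ‖ξ + ξ'‖ / 2})
    (huc : UniformConvexSpace (lp B p)) :
    ∀ t : ℝ, 0 < t → t ≤ 2 → 0 < ⨅ i, δ i t :=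
  stmt_9_general p B δ hδ huc
end

section
/- Let 1 < p < ∞ and let (B_i)_{i∈ℕ} be a sequence of Banach spaces with a common modulus of convexity (inf_i δ_{B_i}(t) > 0 for every t > 0). Then the ℓ^p direct sum ⊕_p B_i is uniformly convex. -/
open ENNReal

open Real Set

private lemma conv2 {q : ℝ} (hq : 1 ≤ q) {u v : ℝ} (hu : 0 ≤ u) (hv : 0 ≤ v) :
    ((u + v) / 2) ^ q ≤ (u ^ q + v ^ q) / 2 := by
  have h := (convexOn_rpow hq).2 (Set.mem_Ici.2 hu) (Set.mem_Ici.2 hv)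
      (by norm_num : (0:ℝ) ≤ 1/2) (by norm_num : (0:ℝ) ≤ 1/2) (by norm_num)
  simp only [smul_eq_mul] at h
  have e : (1/2 : ℝ) * u + (1/2) * v = (u + v)/2 := by ring
  rw [e] at h
  linarith

private lemma normL1 {E : Type*} [SeminormedAddCommGroup E] {q : ℝ} (hq : 1 ≤ q) (a b : E) :
    (‖a + b‖ / 2) ^ q ≤ (‖a‖ ^ q + ‖b‖ ^ q) / 2 := by
  have h1 : (‖a + b‖ / 2) ^ q ≤ ((‖a‖ + ‖b‖) / 2) ^ q := by
    apply Real.rpow_le_rpow (by positivity) ?_ (by linarith)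
    have := norm_add_le a b; linarith
  exact h1.trans (conv2 hq (norm_nonneg a) (norm_nonneg b))

private lemma strict_gap {q : ℝ} (hq : 1 < q) {θ : ℝ} (hθ0 : 0 < θ) (hθ1 : θ ≤ 1) :
    ∃ c : ℝ, 0 < c ∧ c < 1 ∧ ∀ t : ℝ, 0 ≤ t → t ≤ 1 - θ →
      ((1 + t) / 2) ^ q ≤ (1 - c) * ((1 + t ^ q) / 2) := by
  have hq0 : (0:ℝ) ≤ q := by linarith
  set F : ℝ → ℝ := fun t => (1 + t ^ q) / 2 - ((1 + t) / 2) ^ q with hF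
  have hcont : Continuous F := by
    apply Continuous.sub
    · exact (continuous_const.add (continuous_id.rpow_const fun x => Or.inr hq0)).div_const 2
    · exact ((continuous_const.add continuous_id).div_const 2).rpow_const fun x => Or.inr hq0
  by_cases hne : 1 - θ < 0
  · exact ⟨1/2, by norm_num, by norm_num,
      fun t ht ht' => absurd (ht.trans ht') (by linarith)⟩
  push_neg at hne
  obtain ⟨t₀, ht₀, hmin⟩ := isCompact_Icc.exists_isMinOn (s := Set.Icc (0:ℝ) (1-θ))
    ⟨0, by constructor <;> linarith⟩ hcont.continuousOn
  have ht₀0 : 0 ≤ t₀ := ht₀.1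
  have ht₀1 : t₀ < 1 := by have := ht₀.2; linarith
  have hFpos : 0 < F t₀ := by
    have h := (strictConvexOn_rpow hq).2 (Set.mem_Ici.2 zero_le_one) (Set.mem_Ici.2 ht₀0)
      (ne_of_lt ht₀1).symm (by norm_num : (0:ℝ) < 1/2) (by norm_num : (0:ℝ) < 1/2) (by norm_num)
    simp only [smul_eq_mul, Real.one_rpow] at h
    have e : (1/2 : ℝ) * 1 + (1/2) * t₀ = (1 + t₀)/2 := by ring
    rw [e] at h
    show 0 < (1 + t₀ ^ q) / 2 - ((1 + t₀) / 2) ^ q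
    linarith
  refine ⟨min (F t₀) (1/2), lt_min hFpos one_half_pos,
    (min_le_right _ _).trans_lt (by norm_num), fun t ht ht' => ?_⟩
  have hFt : F t₀ ≤ F t := hmin ⟨ht, ht'⟩
  have hc2 : min (F t₀) (1/2) ≤ (1 + t ^ q)/2 - ((1 + t)/2) ^ q := (min_le_left _ _).trans hFt
  have htq1 : t ^ q ≤ 1 := Real.rpow_le_one ht (by linarith) hq0
  have h3 : min (F t₀) (1/2) * ((1 + t ^ q)/2) ≤ min (F t₀) (1/2) * 1 :=
    mul_le_mul_of_nonneg_left (by linarith) (le_of_lt (lt_min hFpos one_half_pos))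
  nlinarith [hc2, h3]

private lemma ball_aux {E : Type*} [NormedAddCommGroup E] [NormedSpace ℝ E] {ε d : ℝ}
    (hε : 0 < ε) (hd : 0 < d)
    (h : ∀ x : E, ‖x‖ = 1 → ∀ y : E, ‖y‖ = 1 → ε / 3 ≤ ‖x - y‖ → ‖x + y‖ ≤ 2 - d) :
    ∀ x : E, ‖x‖ ≤ 1 → ∀ y : E, ‖y‖ ≤ 1 → ε ≤ ‖x - y‖ →
      ‖x + y‖ ≤ 2 - min (1/2 : ℝ) (min (ε/3) (d/3)) := by
  have hε' : 0 < ε / 3 := by linarith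
  set δ' := min (1/2 : ℝ) (min (ε / 3) (d / 3)) with hδ'def
  intro x hx y hy hxy
  obtain hx' | hx' := le_or_gt ‖x‖ (1 - δ')
  · rw [← one_add_one_eq_two]
    exact (norm_add_le_of_le hx' hy).trans (sub_add_eq_add_sub _ _ _).le
  obtain hy' | hy' := le_or_gt ‖y‖ (1 - δ')
  · rw [← one_add_one_eq_two]
    exact (norm_add_le_of_le hx hy').trans (add_sub_assoc _ _ _).ge
  have hδ'' : 0 < 1 - δ' := sub_pos_of_lt (min_lt_of_left_lt one_half_lt_one)
  have h₁ : ∀ z : E, 1 - δ' < ‖z‖ → ‖‖z‖⁻¹ • z‖ = 1 := by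
    rintro z hz
    rw [norm_smul_of_nonneg (inv_nonneg.2 <| norm_nonneg _), inv_mul_cancel₀ (hδ''.trans hz).ne']
  have h₂ : ∀ z : E, ‖z‖ ≤ 1 → 1 - δ' ≤ ‖z‖ → ‖‖z‖⁻¹ • z - z‖ ≤ δ' := by
    rintro z hz hδz
    nth_rw 3 [← one_smul ℝ z]
    rwa [← sub_smul,
      norm_smul_of_nonneg (sub_nonneg_of_le <| (one_le_inv₀ (hδ''.trans_le hδz)).2 hz),
      sub_mul, inv_mul_cancel₀ (hδ''.trans_le hδz).ne', one_mul, sub_le_comm]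
  set x' := ‖x‖⁻¹ • x
  set y' := ‖y‖⁻¹ • y
  have hxy' : ε / 3 ≤ ‖x' - y'‖ :=
    calc
      ε / 3 = ε - (ε / 3 + ε / 3) := by ring
      _ ≤ ‖x - y‖ - (‖x' - x‖ + ‖y' - y‖) := by
        gcongr
        · exact (h₂ _ hx hx'.le).trans <| min_le_of_right_le <| min_le_left _ _
        · exact (h₂ _ hy hy'.le).trans <| min_le_of_right_le <| min_le_left _ _
      _ ≤ _ := by
        have : ∀ x' y', x - y = x' - y' + (x - x') + (y' - y) := fun _ _ => by abel
        rw [sub_le_iff_le_add, norm_sub_rev _ x, ← add_assoc, this]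
        exact norm_add₃_le
  calc
    ‖x + y‖ ≤ ‖x' + y'‖ + ‖x' - x‖ + ‖y' - y‖ := by
      have : ∀ x' y', x + y = x' + y' + (x - x') + (y - y') := fun _ _ => by abel
      rw [norm_sub_rev, norm_sub_rev y', this]
      exact norm_add₃_le
    _ ≤ 2 - d + δ' + δ' :=
      (add_le_add_three (h _ (h₁ _ hx') _ (h₁ _ hy') hxy') (h₂ _ hx hx'.le) (h₂ _ hy hy'.le))
    _ ≤ 2 - δ' := by
      have : δ' ≤ d / 3 := min_le_of_right_le <| min_le_right _ _
      linarith

private lemma normalized_claim {E : Type*} [NormedAddCommGroup E] [NormedSpace ℝ E]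
    {q β c ε₀ : ℝ} (hq : 1 < q) (hβ0 : 0 < β) (hβ1 : β ≤ 1) (hc0 : 0 < c) (hc1 : c < 1)
    (hcprop : ∀ t : ℝ, 0 ≤ t → t ≤ 1 - β/2 → ((1 + t)/2) ^ q ≤ (1 - c) * ((1 + t ^ q)/2))
    (hball : ∀ u : E, ‖u‖ ≤ 1 → ∀ v : E, ‖v‖ ≤ 1 → ε₀ ≤ ‖u - v‖ → ‖u + v‖ ≤ 2 - β)
    (a b : E) (ha : ‖a‖ = 1) (hb : ‖b‖ ≤ 1) (hab : ε₀ ≤ ‖a - b‖) :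
    (‖a + b‖/2) ^ q ≤
      (1 - min c ((1 - (1 - β/2) ^ q) / (1 + (1 - β/2) ^ q))) * ((1 + ‖b‖ ^ q)/2) := by
  have hq0 : (0:ℝ) ≤ q := by linarith
  set r := (1 - β/2 : ℝ) ^ q with hrdef
  have hβhalf : (0:ℝ) < 1 - β/2 := by linarith
  have hr0 : 0 < r := Real.rpow_pos_of_pos hβhalf q
  have hr1 : r < 1 := Real.rpow_lt_one hβhalf.le (by linarith) (by linarith)
  set η := min c ((1 - r)/(1 + r)) with hηdef
  have hη0 : 0 < η := lt_min hc0 (div_pos (by linarith) (by linarith))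
  have hηc : η ≤ c := min_le_left _ _
  have hbq0 : (0:ℝ) ≤ ‖b‖ ^ q := Real.rpow_nonneg (norm_nonneg b) q
  rcases le_or_gt ‖b‖ (1 - β/2) with hcase | hcase
  · have h1 : (‖a + b‖/2) ^ q ≤ ((1 + ‖b‖)/2) ^ q := by
      apply Real.rpow_le_rpow (by positivity) ?_ hq0
      have := norm_add_le a b; rw [ha] at this; linarith
    have h2 := hcprop ‖b‖ (norm_nonneg b) hcase
    have h3 : (1 - c) * ((1 + ‖b‖ ^ q)/2) ≤ (1 - η) * ((1 + ‖b‖ ^ q)/2) :=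
      mul_le_mul_of_nonneg_right (by linarith) (by positivity)
    linarith
  · have h4 : ‖a + b‖ ≤ 2 - β := hball a (le_of_eq ha) b hb hab
    have h5 : (‖a + b‖/2) ^ q ≤ r := by
      rw [hrdef]
      exact Real.rpow_le_rpow (by positivity) (by linarith) hq0
    have h6 : r < ‖b‖ ^ q := Real.rpow_lt_rpow hβhalf.le hcase (by linarith)
    have h1r : (1 + r) ≠ 0 := by positivity
    have he : (1 - r)/(1 + r) = 1 - 2*r/(1 + r) := by field_simp; ring
    have h7 : 2*r/(1 + r) ≤ 1 - η := by
      have h : η ≤ (1 - r)/(1 + r) := min_le_right _ _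
      rw [he] at h
      linarith
    have h8 : (1 + r)/2 ≤ (1 + ‖b‖ ^ q)/2 := by linarith
    calc (‖a + b‖/2) ^ q ≤ r := h5
      _ = (2*r/(1 + r)) * ((1 + r)/2) := by field_simp
      _ ≤ (1 - η) * ((1 + ‖b‖ ^ q)/2) := by
          apply mul_le_mul h7 h8 (by positivity) (by linarith)

private lemma scaled_claim_aux {E : Type*} [NormedAddCommGroup E] [NormedSpace ℝ E]
    {q β c ε₀ : ℝ} (hq : 1 < q) (hβ0 : 0 < β) (hβ1 : β ≤ 1) (hc0 : 0 < c) (hc1 : c < 1)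
    (hcprop : ∀ t : ℝ, 0 ≤ t → t ≤ 1 - β/2 → ((1 + t)/2) ^ q ≤ (1 - c) * ((1 + t ^ q)/2))
    (hball : ∀ u : E, ‖u‖ ≤ 1 → ∀ v : E, ‖v‖ ≤ 1 → ε₀ ≤ ‖u - v‖ → ‖u + v‖ ≤ 2 - β)
    (a b : E) (hba : ‖b‖ ≤ ‖a‖) (hab : ε₀ * max ‖a‖ ‖b‖ ≤ ‖a - b‖) :
    (‖a + b‖/2) ^ q ≤
      (1 - min c ((1 - (1 - β/2) ^ q) / (1 + (1 - β/2) ^ q))) * ((‖a‖ ^ q + ‖b‖ ^ q)/2) := by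
  have hq0 : (0:ℝ) < q := by linarith
  set η := min c ((1 - (1 - β/2) ^ q) / (1 + (1 - β/2) ^ q)) with hηdef
  rcases eq_or_lt_of_le (norm_nonneg a) with h0 | h0
  · have ha0 : a = 0 := norm_eq_zero.1 h0.symm
    have hb0 : b = 0 := norm_eq_zero.1 (le_antisymm (h0 ▸ hba) (norm_nonneg b))
    subst ha0; subst hb0
    simp [Real.zero_rpow hq0.ne']
  · have hmax : max ‖a‖ ‖b‖ = ‖a‖ := max_eq_left hba
    rw [hmax] at hab
    set s := ‖a‖ with hsdef
    set a' := s⁻¹ • a with ha'def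
    set b' := s⁻¹ • b with hb'def
    have hsinv : (0:ℝ) ≤ s⁻¹ := inv_nonneg.2 h0.le
    have ha' : ‖a'‖ = 1 := by
      rw [ha'def, norm_smul_of_nonneg hsinv, ← hsdef, inv_mul_cancel₀ h0.ne']
    have hb' : ‖b'‖ ≤ 1 := by
      rw [hb'def, norm_smul_of_nonneg hsinv]
      rw [inv_mul_le_iff₀ h0, mul_one]
      exact hba
    have hab' : ε₀ ≤ ‖a' - b'‖ := by
      rw [ha'def, hb'def, ← smul_sub, norm_smul_of_nonneg hsinv]
      rw [← div_eq_inv_mul, le_div_iff₀ h0]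
      linarith [hab]
    have key := normalized_claim hq hβ0 hβ1 hc0 hc1 hcprop hball a' b' ha' hb' hab'
    rw [← hηdef] at key
    have hsum : a + b = s • (a' + b') := by
      rw [ha'def, hb'def, smul_add, smul_inv_smul₀ h0.ne', smul_inv_smul₀ h0.ne']
    have h9 : ‖a + b‖ = s * ‖a' + b'‖ := by
      rw [hsum, norm_smul_of_nonneg h0.le]
    have hbnorm : ‖b‖ = s * ‖b'‖ := by
      rw [hb'def, norm_smul_of_nonneg hsinv, mul_inv_cancel_left₀ h0.ne']
    have hbq : ‖b‖ ^ q = s ^ q * ‖b'‖ ^ q := by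
      rw [hbnorm, Real.mul_rpow h0.le (norm_nonneg _)]
    have hsq0 : (0:ℝ) ≤ s ^ q := Real.rpow_nonneg h0.le q
    have hmul := mul_le_mul_of_nonneg_left key hsq0
    have hL : s ^ q * (‖a' + b'‖/2) ^ q = (‖a + b‖/2) ^ q := by
      rw [h9, ← Real.mul_rpow h0.le (by positivity), mul_div_assoc]
    rw [hL] at hmul
    have hsq : s ^ q = ‖a‖ ^ q := by rw [hsdef]
    rw [← hsq, hbq]
    have hR : s ^ q * ((1 - η) * ((1 + ‖b'‖ ^ q)/2))
        = (1 - η) * ((s ^ q + s ^ q * ‖b'‖ ^ q)/2) := by ring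
    linarith [hR ▸ hmul]

private lemma scaled_claim {E : Type*} [NormedAddCommGroup E] [NormedSpace ℝ E]
    {q β c ε₀ : ℝ} (hq : 1 < q) (hβ0 : 0 < β) (hβ1 : β ≤ 1) (hc0 : 0 < c) (hc1 : c < 1)
    (hcprop : ∀ t : ℝ, 0 ≤ t → t ≤ 1 - β/2 → ((1 + t)/2) ^ q ≤ (1 - c) * ((1 + t ^ q)/2))
    (hball : ∀ u : E, ‖u‖ ≤ 1 → ∀ v : E, ‖v‖ ≤ 1 → ε₀ ≤ ‖u - v‖ → ‖u + v‖ ≤ 2 - β)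
    (a b : E) (hab : ε₀ * max ‖a‖ ‖b‖ ≤ ‖a - b‖) :
    (‖a + b‖/2) ^ q ≤
      (1 - min c ((1 - (1 - β/2) ^ q) / (1 + (1 - β/2) ^ q))) * ((‖a‖ ^ q + ‖b‖ ^ q)/2) := by
  rcases le_total ‖b‖ ‖a‖ with h | h
  · exact scaled_claim_aux hq hβ0 hβ1 hc0 hc1 hcprop hball a b h hab
  · have hab' : ε₀ * max ‖b‖ ‖a‖ ≤ ‖b - a‖ := by
      rwa [max_comm, ← norm_sub_rev]
    have := scaled_claim_aux hq hβ0 hβ1 hc0 hc1 hcprop hball b a h hab'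
    rw [add_comm b a, add_comm (‖b‖ ^ q)] at this
    exact this

set_option maxHeartbeats 1000000 in

/-- If a family of Banach spaces has a common modulus of convexity, then the `ℓ^p`
direct sum is uniformly convex. -/
theorem stmt_10 (p : ℝ≥0∞) [Fact (1 ≤ p)] (hp : 1 < p) (hp' : p ≠ ⊤)
    (B : ℕ → Type*) [∀ i, NormedAddCommGroup (B i)] [∀ i, NormedSpace ℝ (B i)]
    [∀ i, CompleteSpace (B i)] [∀ i, Nontrivial (B i)]
    (δ : ℕ → ℝ → ℝ)
    (hδ : ∀ i (t : ℝ), δ i t = sInf {s : ℝ | ∃ ξ ξ' : B i,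
      ‖ξ‖ = 1 ∧ ‖ξ'‖ = 1 ∧ t ≤ ‖ξ - ξ'‖ ∧ s = 1 - ‖ξ + ξ'‖ / 2})
    (hcommon : ∀ t : ℝ, 0 < t → t ≤ 2 → 0 < ⨅ i, δ i t) :
    UniformConvexSpace (lp B p) := by
  obtain ⟨q, hqdef⟩ : ∃ q : ℝ, q = p.toReal := ⟨_, rfl⟩
  have hq : 1 < q := by
    rw [hqdef, ← ENNReal.toReal_one]
    exact (ENNReal.toReal_lt_toReal ENNReal.one_ne_top hp').2 hp
  have hq0 : (0:ℝ) < q := by linarith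
  have hq1 : (1:ℝ) ≤ q := hq.le
  have hq0p : 0 < p.toReal := hqdef ▸ hq0
  -- the common sphere estimate
  have sphere : ∀ t : ℝ, 0 < t → t ≤ 2 → ∃ d : ℝ, 0 < d ∧ ∀ i, ∀ ξ ξ' : B i,
      ‖ξ‖ = 1 → ‖ξ'‖ = 1 → t ≤ ‖ξ - ξ'‖ → ‖ξ + ξ'‖ ≤ 2 - d := by
    intro t ht ht2
    have hbdd : ∀ i, ∀ s ∈ {s : ℝ | ∃ ξ ξ' : B i,
        ‖ξ‖ = 1 ∧ ‖ξ'‖ = 1 ∧ t ≤ ‖ξ - ξ'‖ ∧ s = 1 - ‖ξ + ξ'‖ / 2}, 0 ≤ s := by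
      rintro i s ⟨ξ, ξ', h1, h2, h3, rfl⟩
      have := norm_add_le ξ ξ'
      rw [h1, h2] at this
      linarith
    have hnn : ∀ i, 0 ≤ δ i t := by
      intro i; rw [hδ]; exact Real.sInf_nonneg (hbdd i)
    refine ⟨⨅ i, δ i t, hcommon t ht ht2, fun i ξ ξ' hξ hξ' hdist => ?_⟩
    have h1 : δ i t ≤ 1 - ‖ξ + ξ'‖ / 2 := by
      rw [hδ]
      exact csInf_le ⟨0, fun s hs => hbdd i s hs⟩ ⟨ξ, ξ', hξ, hξ', hdist, rfl⟩
    have h2 : (⨅ j, δ j t) ≤ δ i t :=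
      ciInf_le ⟨0, by rintro _ ⟨j, rfl⟩; exact hnn j⟩ i
    have h3 : 0 < ⨅ j, δ j t := hcommon t ht ht2
    linarith
  constructor
  intro ε hε
  obtain ⟨ε', hε'def⟩ : ∃ x : ℝ, x = min ε 2 := ⟨_, rfl⟩
  have hε'0 : 0 < ε' := hε'def ▸ lt_min hε two_pos
  have hε'2 : ε' ≤ 2 := hε'def ▸ min_le_right ε 2
  obtain ⟨ε₀, hε₀def⟩ : ∃ x : ℝ, x = ε' / 4 := ⟨_, rfl⟩
  have hε₀0 : 0 < ε₀ := by rw [hε₀def]; linarith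
  obtain ⟨d, hd, hsph⟩ := sphere (ε₀ / 3) (by linarith) (by rw [hε₀def]; linarith)
  obtain ⟨β, hβdef⟩ : ∃ x : ℝ, x = min (1/2 : ℝ) (min (ε₀/3) (d/3)) := ⟨_, rfl⟩
  have hβ0 : 0 < β := by
    rw [hβdef]; exact lt_min one_half_pos (lt_min (by linarith) (by linarith))
  have hβ1 : β ≤ 1 := by rw [hβdef]; exact (min_le_left _ _).trans (by norm_num)
  have hball : ∀ i, ∀ u : B i, ‖u‖ ≤ 1 → ∀ v : B i, ‖v‖ ≤ 1 → ε₀ ≤ ‖u - v‖ →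
      ‖u + v‖ ≤ 2 - β := by
    intro i u hu v hv huv
    rw [hβdef]
    exact ball_aux hε₀0 hd (fun ξ h1 ξ' h2 h3 => hsph i ξ ξ' h1 h2 h3) u hu v hv huv
  obtain ⟨c, hc0, hc1, hcprop⟩ := strict_gap hq (θ := β/2) (by linarith) (by linarith)
  obtain ⟨η, hηdef⟩ : ∃ x : ℝ, x = min c ((1 - (1 - β/2) ^ q) / (1 + (1 - β/2) ^ q)) :=
    ⟨_, rfl⟩
  have hβhalf : (0:ℝ) < 1 - β/2 := by linarith
  have hr1 : (1 - β/2) ^ q < 1 := Real.rpow_lt_one hβhalf.le (by linarith) hq0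
  have hr0 : 0 < (1 - β/2) ^ q := Real.rpow_pos_of_pos hβhalf q
  have hη0 : 0 < η := by
    rw [hηdef]; exact lt_min hc0 (div_pos (by linarith) (by linarith))
  have hη1 : η < 1 := by rw [hηdef]; exact (min_le_left _ _).trans_lt hc1
  have key : ∀ i, ∀ a b : B i, ε₀ * max ‖a‖ ‖b‖ ≤ ‖a - b‖ →
      (‖a + b‖/2) ^ q ≤ (1 - η) * ((‖a‖ ^ q + ‖b‖ ^ q)/2) := by
    intro i a b h
    rw [hηdef]
    exact scaled_claim hq hβ0 hβ1 hc0 hc1 hcprop (hball i) a b h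
  have h2q : (2:ℝ) < 2 ^ q := by
    nth_rw 1 [show (2:ℝ) = 2 ^ (1:ℝ) from (Real.rpow_one 2).symm]
    exact (Real.rpow_lt_rpow_left_iff one_lt_two).2 hq
  have h2q0 : (0:ℝ) < 2 ^ q := by positivity
  have h4q : (4:ℝ) ^ q = 2 ^ q * 2 ^ q := by
    rw [show (4:ℝ) = 2 * 2 by norm_num, Real.mul_rpow (by norm_num) (by norm_num)]
  have h4q0 : (0:ℝ) < (4:ℝ) ^ q := by positivity
  have hεq0 : 0 < ε' ^ q := Real.rpow_pos_of_pos hε'0 q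
  have hεq2 : ε' ^ q ≤ 2 ^ q := Real.rpow_le_rpow hε'0.le hε'2 hq0.le
  have hgap : (0:ℝ) < 1/(2 * 2 ^ q) - 1/(4:ℝ) ^ q := by
    have h : (1:ℝ)/(4:ℝ) ^ q < 1/(2 * 2 ^ q) :=
      one_div_lt_one_div_of_lt (by positivity)
        (by rw [h4q]; nlinarith : 2 * 2 ^ q < (4:ℝ) ^ q)
    linarith
  obtain ⟨K, hKdef⟩ : ∃ x : ℝ, x = η * ε' ^ q * (1/(2 * 2 ^ q) - 1/(4:ℝ) ^ q) := ⟨_, rfl⟩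
  have hK0 : 0 < K := by rw [hKdef]; exact mul_pos (mul_pos hη0 hεq0) hgap
  have hK1 : K ≤ 1/2 := by
    have s1 : η * ε' ^ q ≤ 1 * 2 ^ q := mul_le_mul hη1.le hεq2 hεq0.le zero_le_one
    have s2 : 1/(2 * 2 ^ q) - 1/(4:ℝ) ^ q ≤ 1/(2 * 2 ^ q) := by
      have : (0:ℝ) ≤ 1/(4:ℝ) ^ q := by positivity
      linarith
    have s3 : K ≤ (1 * 2 ^ q) * (1/(2 * 2 ^ q)) := by
      rw [hKdef]; exact mul_le_mul s1 s2 hgap.le (by positivity)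
    have s4 : ((1:ℝ) * 2 ^ q) * (1/(2 * 2 ^ q)) = 1/2 := by
      rw [one_mul]
      field_simp
    linarith
  refine ⟨2 * (1 - (1 - K) ^ q⁻¹), ?_, ?_⟩
  · have : (1 - K) ^ q⁻¹ < 1 :=
      Real.rpow_lt_one (by linarith) (by linarith) (inv_pos.2 hq0)
    linarith
  intro x hx y hy hxy
  have hε'xy : ε' ≤ ‖x - y‖ := by rw [hε'def]; exact le_trans (min_le_left ε 2) hxy
  have hsx : HasSum (fun i => ‖x i‖ ^ q) 1 := by
    have h := lp.hasSum_norm hq0p x; rw [hx, Real.one_rpow] at h; rw [hqdef]; exact h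
  have hsy : HasSum (fun i => ‖y i‖ ^ q) 1 := by
    have h := lp.hasSum_norm hq0p y; rw [hy, Real.one_rpow] at h; rw [hqdef]; exact h
  have hsxy : HasSum (fun i => ‖(x - y) i‖ ^ q) (‖x - y‖ ^ q) := by
    rw [hqdef]; exact lp.hasSum_norm hq0p (x - y)
  have hsadd : HasSum (fun i => ‖(x + y) i‖ ^ q / 2 ^ q) (‖x + y‖ ^ q / 2 ^ q) := by
    rw [hqdef]; exact (lp.hasSum_norm hq0p (x + y)).div_const _
  have hrhs : HasSum (fun i => (1/2 + η/2 * ε₀ ^ q) * (‖x i‖ ^ q + ‖y i‖ ^ q)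
      - (η/2/2 ^ q) * ‖(x - y) i‖ ^ q)
      ((1/2 + η/2 * ε₀ ^ q) * (1 + 1) - (η/2/2 ^ q) * (‖x - y‖ ^ q)) :=
    ((hsx.add hsy).mul_left _).sub (hsxy.mul_left _)
  have hη2 : (0:ℝ) ≤ η/2 := by linarith
  have hηq : (0:ℝ) ≤ η/2/2 ^ q := div_nonneg hη2 h2q0.le
  have hε₀q0 : (0:ℝ) ≤ ε₀ ^ q := Real.rpow_nonneg hε₀0.le q
  have point : ∀ i, ‖(x + y) i‖ ^ q / 2 ^ q ≤ (1/2 + η/2 * ε₀ ^ q) * (‖x i‖ ^ q + ‖y i‖ ^ q)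
      - (η/2/2 ^ q) * ‖(x - y) i‖ ^ q := by
    intro i
    have hxi : (x + y) i = x i + y i := by rw [lp.coeFn_add]; rfl
    have hxi' : (x - y) i = x i - y i := by rw [lp.coeFn_sub]; rfl
    rw [hxi, hxi']
    have hA : 0 ≤ ‖x i‖ ^ q := Real.rpow_nonneg (norm_nonneg _) q
    have hB : 0 ≤ ‖y i‖ ^ q := Real.rpow_nonneg (norm_nonneg _) q
    have hD : 0 ≤ ‖x i - y i‖ ^ q := Real.rpow_nonneg (norm_nonneg _) q
    have hdiv : ‖x i + y i‖ ^ q / 2 ^ q = (‖x i + y i‖ / 2) ^ q :=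
      (Real.div_rpow (norm_nonneg _) (by norm_num) q).symm
    rw [hdiv]
    have hmax0 : (0:ℝ) ≤ max ‖x i‖ ‖y i‖ := le_max_iff.2 (Or.inl (norm_nonneg _))
    have hmaxq : (max ‖x i‖ ‖y i‖) ^ q ≤ ‖x i‖ ^ q + ‖y i‖ ^ q := by
      rcases max_cases ‖x i‖ ‖y i‖ with ⟨hm, _⟩ | ⟨hm, _⟩ <;> rw [hm] <;> linarith
    rcases le_or_gt (ε₀ * max ‖x i‖ ‖y i‖) ‖x i - y i‖ with hcase | hcase
    · have hkey := key i (x i) (y i) hcase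
      have hDle : ‖x i - y i‖ ^ q ≤ 2 ^ q * (‖x i‖ ^ q + ‖y i‖ ^ q) := by
        have h1 : ‖x i - y i‖ ≤ 2 * max ‖x i‖ ‖y i‖ := by
          have h := norm_sub_le (x i) (y i)
          have h' := le_max_left ‖x i‖ ‖y i‖
          have h'' := le_max_right ‖x i‖ ‖y i‖
          linarith
        have h2 : ‖x i - y i‖ ^ q ≤ (2 * max ‖x i‖ ‖y i‖) ^ q :=
          Real.rpow_le_rpow (norm_nonneg _) h1 hq0.le
        rw [Real.mul_rpow (by norm_num) hmax0] at h2
        have h3 := mul_le_mul_of_nonneg_left hmaxq h2q0.le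
        linarith
      have h3' : (η/2/2 ^ q) * ‖x i - y i‖ ^ q ≤ (η/2) * (‖x i‖ ^ q + ‖y i‖ ^ q) := by
        have h := mul_le_mul_of_nonneg_left hDle hηq
        have he : (η/2/2 ^ q) * (2 ^ q * (‖x i‖ ^ q + ‖y i‖ ^ q))
            = (η/2) * (‖x i‖ ^ q + ‖y i‖ ^ q) := by
          field_simp
        linarith [he ▸ h]
      have h2'' : 0 ≤ η/2 * ε₀ ^ q * (‖x i‖ ^ q + ‖y i‖ ^ q) :=
        mul_nonneg (mul_nonneg hη2 hε₀q0) (by linarith)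
      linarith [hkey]
    · have hDle : ‖x i - y i‖ ^ q ≤ ε₀ ^ q * (‖x i‖ ^ q + ‖y i‖ ^ q) := by
        have h1 : ‖x i - y i‖ ^ q ≤ (ε₀ * max ‖x i‖ ‖y i‖) ^ q :=
          Real.rpow_le_rpow (norm_nonneg _) hcase.le hq0.le
        rw [Real.mul_rpow hε₀0.le hmax0] at h1
        have h2 := mul_le_mul_of_nonneg_left hmaxq hε₀q0
        linarith
      have hL1 := normL1 hq1 (x i) (y i)
      have hDdiv : ‖x i - y i‖ ^ q / 2 ^ q ≤ ‖x i - y i‖ ^ q :=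
        div_le_self hD (by linarith : (1:ℝ) ≤ 2 ^ q)
      have hle1 : η/2/2 ^ q ≤ η/2 := div_le_self hη2 (by linarith : (1:ℝ) ≤ 2 ^ q)
      have t1 : (η/2/2 ^ q) * ‖x i - y i‖ ^ q ≤ (η/2) * ‖x i - y i‖ ^ q :=
        mul_le_mul_of_nonneg_right hle1 hD
      have t2 : (η/2) * ‖x i - y i‖ ^ q ≤ (η/2) * (ε₀ ^ q * (‖x i‖ ^ q + ‖y i‖ ^ q)) :=
        mul_le_mul_of_nonneg_left hDle hη2
      have t3 : (η/2) * (ε₀ ^ q * (‖x i‖ ^ q + ‖y i‖ ^ q))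
          = η/2 * ε₀ ^ q * (‖x i‖ ^ q + ‖y i‖ ^ q) := by ring
      linarith [hL1, t1, t2, t3.le, t3.ge]
  have hsum_le := hasSum_le point hsadd hrhs
  have hxyq : ε' ^ q ≤ ‖x - y‖ ^ q := Real.rpow_le_rpow hε'0.le hε'xy hq0.le
  have hε₀q : ε₀ ^ q = ε' ^ q / (4:ℝ) ^ q := by
    rw [hε₀def, Real.div_rpow hε'0.le (by norm_num)]
  have hmono : (η/2/2 ^ q) * ε' ^ q ≤ (η/2/2 ^ q) * ‖x - y‖ ^ q :=
    mul_le_mul_of_nonneg_left hxyq hηq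
  have hfinal : ‖x + y‖ ^ q / 2 ^ q ≤ 1 - K := by
    rw [hε₀q] at hsum_le
    have e : (1/2 + η/2 * (ε' ^ q / (4:ℝ) ^ q)) * (1 + 1) - (η/2/2 ^ q) * ε' ^ q
        = 1 - η * ε' ^ q * (1/(2 * 2 ^ q) - 1/(4:ℝ) ^ q) := by
      field_simp
      ring
    rw [hKdef]
    linarith [hsum_le, hmono, e]
  have hnn : (0:ℝ) ≤ ‖x + y‖ / 2 := by positivity
  have hdr : (‖x + y‖/2) ^ q ≤ 1 - K := by
    have e2 : (‖x + y‖ / 2) ^ q = ‖x + y‖ ^ q / 2 ^ q :=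
      Real.div_rpow (norm_nonneg _) (by norm_num) q
    rw [e2]; exact hfinal
  have h1K : (0:ℝ) ≤ 1 - K := by linarith
  have hle : ‖x + y‖/2 ≤ (1 - K) ^ q⁻¹ := by
    have h := Real.rpow_le_rpow (by positivity) hdr (inv_nonneg.2 hq0.le)
    rwa [Real.rpow_rpow_inv hnn hq0.ne'] at h
  linarith
end

section
/- Let G be a group acting properly by affine isometries on a Banach space B via α(g)(ξ) = L(g)(ξ) + b(g), let N ⊴ G, and let a ∈ G. On the orbit space B_[a] := (Na × B)/N of the N-action g·(x,ξ) = (gx, α(g)(ξ)), the formula d([(x,ξ)], [(x',ξ')]) := ‖ξ' − α(x'x⁻¹)(ξ)‖ is a well-defined metric. -/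
/-- On the orbit space `B_[a] = (Na × B)/N`, the formula
`d([(x,ξ)],[(x',ξ')]) = ‖ξ' - α(x'x⁻¹)(ξ)‖` is a well-defined metric. -/
theorem stmt_11 {G : Type*} [Group G] {B : Type*} [NormedAddCommGroup B]
    [NormedSpace ℝ B] [CompleteSpace B]
    (L : G →* (B ≃ₗᵢ[ℝ] B)) (b : G → B)
    (hb : ∀ g h : G, b (g * h) = L g (b h) + b g)
    (α : G → B → B) (hα : ∀ g ξ, α g ξ = L g ξ + b g)
    (hproper : ∀ ξ : B, ∀ A : Set B, Bornology.IsBounded A → {g : G | α g ξ ∈ A}.Finite)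
    (N : Subgroup G) [N.Normal] (a : G)
    (D : G → B → G → B → ℝ)
    (hD : ∀ x ξ x' ξ', D x ξ x' ξ' = ‖ξ' - α (x' * x⁻¹) ξ‖) :
    (∀ x x' : G, x * a⁻¹ ∈ N → x' * a⁻¹ ∈ N → ∀ ξ ξ' : B, ∀ g g' : G, g ∈ N → g' ∈ N →
        D (g * x) (α g ξ) (g' * x') (α g' ξ') = D x ξ x' ξ') ∧
    (∀ x x' : G, x * a⁻¹ ∈ N → x' * a⁻¹ ∈ N → ∀ ξ ξ' : B,
        (D x ξ x' ξ' = 0 ↔ ∃ g ∈ N, g * x = x' ∧ α g ξ = ξ')) ∧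
    (∀ x x' : G, x * a⁻¹ ∈ N → x' * a⁻¹ ∈ N → ∀ ξ ξ' : B,
        0 ≤ D x ξ x' ξ' ∧ D x ξ x' ξ' = D x' ξ' x ξ) ∧
    (∀ x x' x'' : G, x * a⁻¹ ∈ N → x' * a⁻¹ ∈ N → x'' * a⁻¹ ∈ N → ∀ ξ ξ' ξ'' : B,
        D x ξ x'' ξ'' ≤ D x ξ x' ξ' + D x' ξ' x'' ξ'') := by
  -- α is a group action: α (g*h) = α g ∘ α h
  have hcomp : ∀ g h : G, ∀ ξ : B, α (g * h) ξ = α g (α h ξ) := by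
    intro g h ξ
    simp only [hα, hb, map_mul, map_add]
    simp [LinearIsometryEquiv.coe_mul, add_assoc]
  -- α g is an isometry on differences
  have hisom : ∀ g : G, ∀ ξ η : B, ‖α g ξ - α g η‖ = ‖ξ - η‖ := by
    intro g ξ η
    have : α g ξ - α g η = L g (ξ - η) := by
      simp [hα, map_sub]
    rw [this, LinearIsometryEquiv.norm_map]
  refine ⟨?_, ?_, ?_, ?_⟩
  · intro x x' _ _ ξ ξ' g g' _ _
    rw [hD, hD]
    have h1 : g' * x' * (g * x)⁻¹ * g = g' * (x' * x⁻¹) := by group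
    have : α (g' * x' * (g * x)⁻¹) (α g ξ) = α g' (α (x' * x⁻¹) ξ) := by
      rw [← hcomp, ← hcomp, h1]
    rw [this, hisom]
  · intro x x' hx hx' ξ ξ'
    rw [hD]
    constructor
    · intro h
      refine ⟨x' * x⁻¹, ?_, by group, ?_⟩
      · have : x' * x⁻¹ = (x' * a⁻¹) * (x * a⁻¹)⁻¹ := by group
        rw [this]; exact mul_mem hx' (inv_mem hx)
      · have := norm_eq_zero.mp h
        have := sub_eq_zero.mp this
        exact this.symm
    · rintro ⟨g, _, hgx, hgξ⟩
      have hg : g = x' * x⁻¹ := by rw [← hgx]; group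
      rw [← hg, hgξ]; simp
  · intro x x' _ _ ξ ξ'
    refine ⟨by rw [hD]; positivity, ?_⟩
    rw [hD, hD]
    have : ‖ξ' - α (x' * x⁻¹) ξ‖ = ‖α (x * x'⁻¹) ξ' - α (x * x'⁻¹) (α (x' * x⁻¹) ξ)‖ :=
      (hisom _ _ _).symm
    rw [this, ← hcomp]
    have h1 : x * x'⁻¹ * (x' * x⁻¹) = 1 := by group
    have h2 : α 1 ξ = ξ := by
      have hb1 : b 1 = 0 := by
        have := hb 1 1
        simp at this
        exact this
      simp [hα, hb1]
    rw [h1, h2, norm_sub_rev]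
  · intro x x' x'' _ _ _ ξ ξ' ξ''
    rw [hD, hD, hD]
    have key : ξ'' - α (x'' * x⁻¹) ξ
        = (ξ'' - α (x'' * x'⁻¹) ξ') + (α (x'' * x'⁻¹) ξ' - α (x'' * x'⁻¹) (α (x' * x⁻¹) ξ)) := by
      rw [← hcomp]
      have : x'' * x'⁻¹ * (x' * x⁻¹) = x'' * x⁻¹ := by group
      rw [this]; abel
    calc ‖ξ'' - α (x'' * x⁻¹) ξ‖
        ≤ ‖ξ'' - α (x'' * x'⁻¹) ξ'‖ + ‖α (x'' * x'⁻¹) ξ' - α (x'' * x'⁻¹) (α (x' * x⁻¹) ξ)‖ := by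
          rw [key]; exact norm_add_le _ _
      _ = ‖ξ' - α (x' * x⁻¹) ξ‖ + ‖ξ'' - α (x'' * x'⁻¹) ξ'‖ := by rw [hisom, add_comm]
      _ = _ := by rw [add_comm]
end

section
/- Let G be a countable residually amenable group, with nested normal subgroups G_{n+1} ⊆ G_n, ⋂_n G_n = {e}, each G/G_n amenable. Equip G with a proper length function l and each quotient G/G_n with the quotient length metric. Then for every r > 0 there exists n_r such that for all n ≥ n_r, the quotient map π_n : G → G/G_n is r-isometric: for every subset Y ⊆ G of diameter less than r, the restriction of π_n to Y is an isometry onto its image. -/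
/-- For a countable residually amenable group with a proper length function, for every
`r > 0` the quotient maps `π_n : G → G/G_n` are eventually `r`-isometric. -/
theorem stmt_18 {G : Type*} [Group G] [Countable G]
    (l : G → ℝ) (hl0 : l 1 = 0) (hlinv : ∀ g : G, l g⁻¹ = l g)
    (hlsub : ∀ g h : G, l (g * h) ≤ l g + l h) (hlnn : ∀ g : G, 0 ≤ l g)
    (hproper : ∀ r : ℝ, {g : G | l g ≤ r}.Finite)
    (Gn : ℕ → Subgroup G) [hnormal : ∀ n, (Gn n).Normal]
    (hnested : ∀ n, Gn (n + 1) ≤ Gn n)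
    (htriv : ∀ g : G, (∀ n, g ∈ Gn n) → g = 1)
    (hamen : ∀ n : ℕ, ∃ μ : Set (G ⧸ Gn n) → ℝ, (∀ A, 0 ≤ μ A) ∧ μ Set.univ = 1 ∧
        (∀ A A', Disjoint A A' → μ (A ∪ A') = μ A + μ A') ∧
        (∀ (A : Set (G ⧸ Gn n)) (x : G ⧸ Gn n), μ ((· * x) '' A) = μ A))
    (lN : (n : ℕ) → G ⧸ Gn n → ℝ)
    (hlN : ∀ (n : ℕ) (g : G),
        lN n (g : G ⧸ Gn n) = sInf {t : ℝ | ∃ h ∈ Gn n, t = l (g * h)}) :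
    ∀ r : ℝ, 0 < r → ∃ nr : ℕ, ∀ n ≥ nr, ∀ Y : Set G,
      (∀ y ∈ Y, ∀ y' ∈ Y, l (y⁻¹ * y') < r) →
      ∀ y ∈ Y, ∀ y' ∈ Y, lN n ((y⁻¹ * y' : G) : G ⧸ Gn n) = l (y⁻¹ * y') := by
  classical
  intro r hr
  have hmono : ∀ m n : ℕ, m ≤ n → Gn n ≤ Gn m := by
    intro m n hmn
    induction n with
    | zero =>
      have : m = 0 := Nat.le_zero.mp hmn
      subst this; exact le_rfl
    | succ k ih =>
      rcases Nat.lt_or_ge m (k + 1) with h | h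
      · exact le_trans (hnested k) (ih (Nat.lt_succ_iff.mp h))
      · have : m = k + 1 := le_antisymm hmn h
        subst this; exact le_rfl
  have hF := hproper (2 * r)
  have hN : ∀ g : G, g ≠ 1 → ∃ n, g ∉ Gn n := by
    intro g hg
    by_contra h
    push_neg at h
    exact hg (htriv g h)
  let N : G → ℕ := fun g => if hg : ∃ n, g ∉ Gn n then Nat.find hg else 0
  refine ⟨hF.toFinset.sup N, ?_⟩
  intro n hn Y hY y hy y' hy'
  set g := y⁻¹ * y' with hg
  have hlg : l g < r := hY y hy y' hy'
  rw [hlN]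
  have hkey : ∀ t ∈ {t : ℝ | ∃ h ∈ Gn n, t = l (g * h)}, l g ≤ t := by
    intro t ht
    obtain ⟨h, hhGn, rfl⟩ := ht
    by_contra hlt
    push_neg at hlt
    have hh1 : h ≠ 1 := by
      rintro rfl
      rw [mul_one] at hlt
      exact lt_irrefl _ hlt
    have hlh : l h ≤ 2 * r := by
      have h1 : l (g⁻¹ * (g * h)) ≤ l g⁻¹ + l (g * h) := hlsub g⁻¹ (g * h)
      have h2 : l h ≤ l g + l (g * h) := by
        rw [inv_mul_cancel_left, hlinv] at h1
        exact h1
      linarith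
    have hmemF : h ∈ hF.toFinset := by
      rw [Set.Finite.mem_toFinset]
      exact hlh
    have hEx : ∃ m, h ∉ Gn m := hN h hh1
    have hNh : h ∉ Gn (N h) := by
      simp only [N, dif_pos hEx]
      exact Nat.find_spec hEx
    have hle : N h ≤ n := le_trans (Finset.le_sup hmemF) hn
    exact hNh (hmono (N h) n hle hhGn)
  have hmem : l g ∈ {t : ℝ | ∃ h ∈ Gn n, t = l (g * h)} :=
    ⟨1, (Gn n).one_mem, by rw [mul_one]⟩
  exact le_antisymm (csInf_le ⟨l g, hkey⟩ hmem) (le_csInf ⟨_, hmem⟩ hkey)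
end
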